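/- Let r ≥ m ≥ 2 and r ≥ 2^{m−1} + 1. Define B_{r,m} = {a ∈ A_{r,m} : wt(a) ≤ m−2 and supp(a) ⊆ {1,...,r−2^{m−1}}}, where A_{r,m} = {a ∈ F_2^r : a_1 = 1, wt(a) ≤ m}. Then A_{r,m} \ B_{r,m} is a generic (r,m)-erasure correcting set. -/

import Mathlib

open Matrix

/-- Hamming weight of a binary vector. -/
def wt {n : ℕ} (v : Fin n → ZMod 2) : ℕ :=
  (Finset.univ.filter (fun j => v j ≠ 0)).card

/-- `A` is a generic `(r,m)`-erasure reducing set. -/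
def GenRed (r m : ℕ) (A : Set (Fin r → ZMod 2)) : Prop :=
  ∀ M : Matrix (Fin r) (Fin m) (ZMod 2), M.rank = m →
    ∃ a ∈ A, wt (Matrix.vecMul a M) = 1

/-- `A` is a generic `(r,m)`-erasure correcting set. -/
def GenCor (r m : ℕ) (A : Set (Fin r → ZMod 2)) : Prop :=
  ∀ m', 1 ≤ m' → m' ≤ m → GenRed r m' A

/-- The set `A_{r,m}` of vectors with first coordinate `1` and weight at most `m`. -/
def Arm (r m : ℕ) (h : 0 < r) : Set (Fin r → ZMod 2) :=
  {a | a ⟨0, h⟩ = 1 ∧ wt a ≤ m}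

/-- The set `B_{r,m}` of vectors of `A_{r,m}` of weight at most `m-2` supported on the
first `r - 2^{m-1}` coordinates. -/
def Brm (r m : ℕ) (h : 0 < r) : Set (Fin r → ZMod 2) :=
  {a | a ∈ Arm r m h ∧ wt a ≤ m - 2 ∧ ∀ i : Fin r, a i ≠ 0 → (i : ℕ) < r - 2 ^ (m - 1)}

/-!
Write the rows of `M` as vectors in `𝔽₂ᵏ`. A vector `a` with `wt (a M) = 1` is the indicator of a
set `S` of rows summing to a standard basis vector `e j`. Over `𝔽₂` every element of the span of
finitely many vectors is a subset sum of them, so for a basis `U` chosen among the rows each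
`M 0 + e j` is the sum of some `W j ⊆ U`, and `S = {0} ∪ W j` sums to `e j` once `0 ∉ W j`. If row
`0` is nonzero, put it into `U`: some `e j` lies outside the span of the other rows of `U`, and
then `0 ∉ W j`. If row `0` is zero, `j ↦ W j` is injective, so some `W j` differs from `U`. Either
way `S` contains row `0` and has at most `max k 2` elements.

If that `S` lies in `B_{r,m}`, it misses the set `T` of the last `2^(m-1)` rows and has at most
`m - 2` elements. A zero row, or a pair of equal rows, in `T` can then be added to `S`. Otherwise
the rows in `T` are `2^(m-1)` distinct nonzero vectors: this forces `k = m`, and they span `𝔽₂ᵐ`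
because a proper subspace has at most `2^(m-1)` elements. A basis `U ⊆ T` then gives `k ≥ 3`
injective choices `W j`, one of which is neither empty nor all of `U`, so that `S = {0} ∪ W j`
meets `T` and has at most `m` elements.
-/

open Finset Submodule

theorem add_self_eq_zero_of_zmod_two {V : Type*} [AddCommGroup V] [Module (ZMod 2) V] (x : V) :
    x + x = 0 := by
  rw [← two_smul (ZMod 2) x, show (2 : ZMod 2) = 0 from rfl, zero_smul]

theorem exists_spanning_superset_card_le_finrank {K ι V : Type*} [Field K] [AddCommGroup V]
    [Module K V] [FiniteDimensional K V] {f : ι → V} {s T : Finset ι}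
    (hs : LinearIndepOn K f (s : Set ι)) (hsT : s ⊆ T) (hT : span K (f '' T) = ⊤) :
    ∃ U, s ⊆ U ∧ U ⊆ T ∧ span K (f '' U) = ⊤ ∧ U.card ≤ Module.finrank K V := by
  classical
  obtain ⟨b, hbT, hsb, hTb, hb⟩ := exists_linearIndepOn_extension hs (coe_subset.mpr hsT)
  set U := T.filter (· ∈ b)
  have hU : (U : Set ι) = b := by
    ext i
    simpa [U] using fun hi => hbT hi
  refine ⟨U, fun i hi => mem_filter.mpr ⟨hsT hi, hsb hi⟩, filter_subset _ _, ?_, ?_⟩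
  · rw [hU, eq_top_iff, ← hT]
    exact span_le.mpr hTb
  · rw [← hU] at hb
    simpa using hb.fintype_card_le_finrank

theorem span_eq_top_of_natCard_lt {K V : Type*} [Ring K] [AddCommGroup V] [Module K V] [Finite V]
    [DecidableEq V] {X : Finset V} (hX0 : (0 : V) ∉ X) (hX : Nat.card V < 2 * (X.card + 1)) :
    span K (X : Set V) = ⊤ := by
  set p := span K (X : Set V)
  have hcard : X.card + 1 ≤ Nat.card p := by
    rw [← card_insert_of_notMem hX0, ← Set.ncard_coe_finset]
    refine (Set.ncard_le_ncard (t := (p : Set V)) ?_ (Set.toFinite _)).trans_eq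
      (Nat.card_coe_set_eq _).symm
    rw [coe_insert, Set.insert_subset_iff]
    exact ⟨p.zero_mem, subset_span⟩
  by_contra hp
  have hindex : 2 ≤ p.toAddSubgroup.index := by
    have h0 := p.toAddSubgroup.index_ne_zero_of_finite
    have h1 : p.toAddSubgroup.index ≠ 1 := by
      rwa [Ne, AddSubgroup.index_eq_one, toAddSubgroup_eq_top]
    omega
  have hhalf : Nat.card p * 2 ≤ Nat.card V :=
    p.toAddSubgroup.card_mul_index ▸ Nat.mul_le_mul_left _ hindex
  omega

section SubsetSums

variable {ι κ V : Type*} [AddCommGroup V] [Module (ZMod 2) V] {f : ι → V}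

theorem exists_subset_sum_eq_of_mem_span {U : Finset ι} {x : V}
    (hx : x ∈ span (ZMod 2) (f '' U)) : ∃ W ⊆ U, ∑ i ∈ W, f i = x := by
  obtain ⟨l, hlU, rfl⟩ := (Finsupp.mem_span_image_iff_linearCombination _).mp hx
  refine ⟨l.support, fun i hi => hlU hi, ?_⟩
  rw [Finsupp.linearCombination_apply, Finsupp.sum]
  refine sum_congr rfl fun i hi => ?_
  rw [show l i = 1 from Fin.eq_one_of_ne_zero _ (Finsupp.mem_support_iff.mp hi), one_smul]

theorem exists_subset_sum_eq_add_notMem [Fintype κ] {e : κ → V} (he : Function.Injective e)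
    {U : Finset ι} (hU : span (ZMod 2) (f '' U) = ⊤) (y : V) {F : Finset (Finset ι)}
    (hF : F.card < Fintype.card κ) :
    ∃ j, ∃ W ⊆ U, W ∉ F ∧ ∑ i ∈ W, f i = y + e j := by
  classical
  choose W hWU hW using fun j => exists_subset_sum_eq_of_mem_span (hU ▸ mem_top (x := y + e j))
  have hWinj : Function.Injective W := fun j j' h =>
    he (add_left_cancel ((hW j).symm.trans (h ▸ hW j')))
  obtain ⟨_, hmem, hWF⟩ := exists_mem_notMem_of_card_lt_card
    (hF.trans_eq (card_image_of_injective univ hWinj).symm)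
  obtain ⟨j, -, rfl⟩ := mem_image.mp hmem
  exact ⟨j, W j, hWU j, hWF, hW j⟩

theorem exists_subset_erase_sum_eq_add [Finite V] [DecidableEq ι] {e : κ → V}
    (he : span (ZMod 2) (Set.range e) = ⊤) {U : Finset ι} (hU : span (ZMod 2) (f '' U) = ⊤)
    (hUcard : U.card ≤ Module.finrank (ZMod 2) V) {u : ι} (hu : u ∈ U) :
    ∃ j, ∃ W ⊆ U.erase u, ∑ i ∈ W, f i = f u + e j := by
  classical
  have hspan : span (ZMod 2) (f '' (U.erase u)) ≠ ⊤ := by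
    intro htop
    have := finrank_span_finset_le_card (R := ZMod 2) ((U.erase u).image f)
    rw [coe_image, Set.finrank, htop, finrank_top] at this
    have := card_image_le (s := U.erase u) (f := f)
    have := card_erase_add_one hu
    omega
  obtain ⟨j, hj⟩ : ∃ j, e j ∉ span (ZMod 2) (f '' (U.erase u)) := by
    by_contra! h
    exact hspan (eq_top_iff.mpr (he ▸ span_le.mpr (Set.range_subset_iff.mpr h)))
  obtain ⟨W, hWU, hW⟩ := exists_subset_sum_eq_of_mem_span (hU ▸ mem_top (x := f u + e j))
  have huW : u ∉ W := by
    intro hu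
    apply hj
    rw [← add_left_cancel ((add_sum_erase W f hu).trans hW)]
    exact sum_mem fun i hi => subset_span ⟨i, erase_subset_erase u hWU hi, rfl⟩
  exact ⟨j, W, fun i hi => mem_erase.mpr ⟨fun h => huW (h ▸ hi), hWU hi⟩, hW⟩

theorem sum_insert_eq_of_sum_eq_add [DecidableEq ι] {s : Finset ι} {i₀ : ι} {x : V}
    (hi₀ : i₀ ∉ s) (hs : ∑ i ∈ s, f i = f i₀ + x) : ∑ i ∈ insert i₀ s, f i = x := by
  rw [sum_insert hi₀, hs, ← add_assoc, add_self_eq_zero_of_zmod_two, zero_add]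

variable [Finite V] [Fintype κ] [DecidableEq ι] (b : Module.Basis κ (ZMod 2) V)

theorem natCard_eq_two_pow_finrank : Nat.card V = 2 ^ Module.finrank (ZMod 2) V := by
  rw [Module.natCard_eq_pow_finrank (K := ZMod 2), Nat.card_zmod]

theorem exists_subset_sum_eq_basis [Fintype ι] (hf : span (ZMod 2) (Set.range f) = ⊤) (i₀ : ι)
    (hV : 0 < Module.finrank (ZMod 2) V) :
    ∃ S, i₀ ∈ S ∧ S.card ≤ max (Module.finrank (ZMod 2) V) 2 ∧ ∃ j, ∑ i ∈ S, f i = b j := by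
  classical
  suffices ∃ j, ∃ W, i₀ ∉ W ∧ W.card + 1 ≤ max (Module.finrank (ZMod 2) V) 2 ∧
      ∑ i ∈ W, f i = f i₀ + b j by
    obtain ⟨j, W, hi₀, hcard, hW⟩ := this
    exact ⟨insert i₀ W, mem_insert_self _ _, (card_insert_of_notMem hi₀).trans_le hcard, j,
      sum_insert_eq_of_sum_eq_add hi₀ hW⟩
  by_cases h0 : f i₀ = 0
  · have hspan : span (ZMod 2) (f '' (univ.filter (f · ≠ 0) : Finset ι)) = ⊤ := by
      rw [← hf, ← span_sdiff_singleton_zero (s := Set.range f)]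
      congr 1
      ext
      aesop
    obtain ⟨U, -, hU, hUspan, hUcard⟩ :=
      exists_spanning_superset_card_le_finrank (s := ∅) (by simp) (empty_subset _) hspan
    -- For `k ≥ 2` the one unwanted subset is `U` itself; for `k = 1` every subset of `U` will do.
    obtain ⟨j, W, hWU, hWF, hW⟩ := exists_subset_sum_eq_add_notMem b.injective hUspan (f i₀)
      (F := if 2 ≤ Module.finrank (ZMod 2) V then {U} else ∅) (by
        rw [← Module.finrank_eq_card_basis b]
        split_ifs <;> simp <;> omega)
    refine ⟨j, W, fun h => by simpa [h0] using (mem_filter.mp (hU (hWU h))).2, ?_, hW⟩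
    split_ifs at hWF with h2
    · have := card_lt_card (ssubset_of_subset_of_ne hWU (by simpa using hWF))
      omega
    · have := card_le_card hWU
      omega
  · obtain ⟨U, hi₀U, -, hUspan, hUcard⟩ := exists_spanning_superset_card_le_finrank
      (K := ZMod 2) (f := f) (s := {i₀}) (T := univ)
      (by rw [coe_singleton]; exact (linearIndepOn_singleton_iff _).mpr h0) (subset_univ _)
      (by simpa using hf)
    obtain ⟨j, W, hWU, hW⟩ := exists_subset_erase_sum_eq_add b.span_eq hUspan hUcard
      (singleton_subset_iff.mp hi₀U)
    refine ⟨j, W, fun h => by simpa using hWU h, ?_, hW⟩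
    have := card_le_card hWU
    have := card_erase_add_one (singleton_subset_iff.mp hi₀U)
    omega

theorem exists_subset_sum_eq_basis_meeting_of_injOn {i₀ : ι} {T : Finset ι} (hi₀ : i₀ ∉ T)
    (hn : 3 ≤ Module.finrank (ZMod 2) V) (hT : 2 ^ (Module.finrank (ZMod 2) V - 1) ≤ T.card)
    (hinj : Set.InjOn f T) (hne : ∀ t ∈ T, f t ≠ 0) :
    ∃ S, i₀ ∈ S ∧ S.card ≤ Module.finrank (ZMod 2) V ∧ (∃ t ∈ S, t ∈ T) ∧
      ∃ j, ∑ i ∈ S, f i = b j := by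
  classical
  have hspan : span (ZMod 2) (f '' T) = ⊤ := by
    rw [← coe_image]
    refine span_eq_top_of_natCard_lt (fun h => ?_) ?_
    · obtain ⟨t, ht, h0⟩ := mem_image.mp h
      exact hne t ht h0
    · rw [natCard_eq_two_pow_finrank, card_image_of_injOn hinj]
      have : 2 ^ Module.finrank (ZMod 2) V = 2 * 2 ^ (Module.finrank (ZMod 2) V - 1) := by
        rw [← pow_succ']
        congr 1
        omega
      omega
  obtain ⟨U, -, hUT, hUspan, hUcard⟩ :=
    exists_spanning_superset_card_le_finrank (s := ∅) (by simp) (empty_subset _) hspan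
  obtain ⟨j, W, hWU, hWF, hW⟩ := exists_subset_sum_eq_add_notMem b.injective hUspan (f i₀)
    (F := {∅, U}) (by
      rw [← Module.finrank_eq_card_basis b]
      exact card_le_two.trans_lt (by omega))
  have hi₀W : i₀ ∉ W := fun h => hi₀ (hUT (hWU h))
  simp only [mem_insert, mem_singleton, not_or] at hWF
  obtain ⟨t, ht⟩ := nonempty_iff_ne_empty.mpr hWF.1
  have := card_lt_card (ssubset_of_subset_of_ne hWU hWF.2)
  refine ⟨insert i₀ W, mem_insert_self _ _, ?_, ⟨t, mem_insert_of_mem ht, hUT (hWU ht)⟩, j,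
    sum_insert_eq_of_sum_eq_add hi₀W hW⟩
  rw [card_insert_of_notMem hi₀W]
  omega

theorem exists_subset_sum_eq_basis_meeting {m : ℕ} {i₀ : ι} {j₀ : κ} {S₀ T : Finset ι}
    (hi₀ : i₀ ∈ S₀) (hS₀T : Disjoint S₀ T) (hS₀ : ∑ i ∈ S₀, f i = b j₀)
    (hS₀card : S₀.card + 2 ≤ m) (hnm : Module.finrank (ZMod 2) V ≤ m) (hT : 2 ^ (m - 1) ≤ T.card) :
    ∃ S, i₀ ∈ S ∧ S.card ≤ m ∧ (∃ t ∈ S, t ∈ T) ∧ ∃ j, ∑ i ∈ S, f i = b j := by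
  classical
  have hT₀ : ∀ t ∈ T, t ∉ S₀ := fun t ht => disjoint_right.mp hS₀T ht
  by_cases hzero : ∃ t ∈ T, f t = 0
  · obtain ⟨t, ht, h0⟩ := hzero
    refine ⟨insert t S₀, mem_insert_of_mem hi₀, ?_, ⟨t, mem_insert_self _ _, ht⟩, j₀, ?_⟩
    · rw [card_insert_of_notMem (hT₀ t ht)]
      omega
    · rw [sum_insert (hT₀ t ht), h0, zero_add, hS₀]
  by_cases hrep : ∃ s ∈ T, ∃ t ∈ T, s ≠ t ∧ f s = f t
  · obtain ⟨s, hs, t, ht, hst, hf⟩ := hrep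
    have hs' : s ∉ insert t S₀ := by simpa [hst] using hT₀ s hs
    refine ⟨insert s (insert t S₀), mem_insert_of_mem (mem_insert_of_mem hi₀), ?_,
      ⟨s, mem_insert_self _ _, hs⟩, j₀, ?_⟩
    · rw [card_insert_of_notMem hs', card_insert_of_notMem (hT₀ t ht)]
      omega
    · rw [sum_insert hs', sum_insert (hT₀ t ht), hf, ← add_assoc, add_self_eq_zero_of_zmod_two,
        zero_add, hS₀]
  push Not at hzero hrep
  have hinj : Set.InjOn f T := fun s hs t ht hf => by_contra fun hst => hrep s hs t ht hst hf
  have hTV : T.card < 2 ^ Module.finrank (ZMod 2) V := by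
    rw [← natCard_eq_two_pow_finrank, ← card_image_of_injOn hinj, ← Set.ncard_coe_finset,
      ← Set.ncard_univ]
    refine Set.ncard_lt_ncard ((Set.ssubset_iff_of_subset (Set.subset_univ _)).mpr
      ⟨0, Set.mem_univ _, fun h => ?_⟩)
    obtain ⟨t, ht, h0⟩ := mem_image.mp h
    exact hzero t ht h0
  have hmn : m - 1 < Module.finrank (ZMod 2) V :=
    (Nat.pow_lt_pow_iff_right (by norm_num)).mp (hT.trans_lt hTV)
  have hS₀pos := card_pos.mpr ⟨i₀, hi₀⟩
  obtain ⟨S, hS⟩ := exists_subset_sum_eq_basis_meeting_of_injOn b (disjoint_left.mp hS₀T hi₀)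
    (by omega) (by rwa [show Module.finrank (ZMod 2) V = m by omega]) hinj hzero
  exact ⟨S, hS.1, hS.2.1.trans hnm, hS.2.2⟩

end SubsetSums

theorem Matrix.span_row_eq_top_of_rank_eq {K ι n : Type*} [Field K] [Finite ι] [Fintype n]
    (M : Matrix ι n K) (hM : M.rank = Fintype.card n) : span K (Set.range M) = ⊤ :=
  eq_top_of_finrank_eq (M.rank_eq_finrank_span_row.symm.trans
    (hM.trans (Module.finrank_fintype_fun_eq_card K).symm))

theorem Matrix.vecMul_indicator_one {R ι n : Type*} [NonAssocSemiring R] [Fintype ι]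
    (S : Finset ι) (M : Matrix ι n R) : vecMul ((S : Set ι).indicator 1) M = ∑ i ∈ S, M i := by
  classical
  ext j
  rw [Finset.sum_apply (g := fun i => M i)]
  simp [vecMul, dotProduct, Set.indicator_apply]

theorem wt_indicator_one {n : ℕ} (S : Finset (Fin n)) :
    wt ((S : Set (Fin n)).indicator 1) = S.card := by
  simp [wt]

theorem wt_single_one {n : ℕ} (j : Fin n) : wt (Pi.single j (1 : ZMod 2)) = 1 := by
  simp [wt, Pi.single_apply, filter_eq']

theorem indicator_one_mem_Arm_diff_Brm {r m : ℕ} (hr : 0 < r) {S : Finset (Fin r)}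
    (h0 : ⟨0, hr⟩ ∈ S) (hcard : S.card ≤ m)
    (hS : m - 2 < S.card ∨ ∃ t ∈ S, r - 2 ^ (m - 1) ≤ (t : ℕ)) :
    (S : Set (Fin r)).indicator 1 ∈ Arm r m hr \ Brm r m hr := by
  refine ⟨⟨by simp [h0], by rwa [wt_indicator_one]⟩, fun ⟨_, hwt, hsupp⟩ => ?_⟩
  rw [wt_indicator_one] at hwt
  obtain hlt | ⟨t, ht, hle⟩ := hS
  · omega
  · have := hsupp t (by simp [ht])
    omega

theorem stmt_18 (r m : ℕ) (hm : 2 ≤ m) (hr : m ≤ r) (hbig : 2 ^ (m - 1) + 1 ≤ r) :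
    GenCor r m (Arm r m (by omega) \ Brm r m (by omega)) := by
  intro k hk hkm M hM
  have hr0 : 0 < r := by omega
  have hpow := Nat.two_pow_pos (m - 1)
  have hk' : Module.finrank (ZMod 2) (Fin k → ZMod 2) = k := Module.finrank_fin_fun _
  set T : Finset (Fin r) := Ici ⟨r - 2 ^ (m - 1), by omega⟩
  have hT : ∀ t, t ∈ T ↔ r - 2 ^ (m - 1) ≤ (t : ℕ) := fun t => by simp [T, Fin.le_def]
  suffices ∃ S, ⟨0, hr0⟩ ∈ S ∧ S.card ≤ m ∧ (m - 2 < S.card ∨ ∃ t ∈ S, t ∈ T) ∧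
      ∃ j, ∑ i ∈ S, M i = Pi.single j 1 by
    obtain ⟨S, h0, hcard, hS, j, hsum⟩ := this
    refine ⟨_, indicator_one_mem_Arm_diff_Brm hr0 h0 hcard ?_, ?_⟩
    · simpa only [hT] using hS
    · rw [vecMul_indicator_one, hsum, wt_single_one]
  simp only [← Pi.basisFun_apply (ZMod 2)]
  obtain ⟨S₀, h0, hS₀card, j₀, hS₀⟩ := exists_subset_sum_eq_basis (Pi.basisFun (ZMod 2) (Fin k))
    (M.span_row_eq_top_of_rank_eq (by simpa using hM)) ⟨0, hr0⟩ (by omega)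
  by_cases hgood : m - 2 < S₀.card ∨ ∃ t ∈ S₀, t ∈ T
  · exact ⟨S₀, h0, hS₀card.trans (by rw [hk']; exact max_le hkm hm), hgood, j₀, hS₀⟩
  push Not at hgood
  obtain ⟨S, hS⟩ := exists_subset_sum_eq_basis_meeting _ (m := m) h0
    (disjoint_left.mpr hgood.2) hS₀ (by omega) (by omega) (by simp [T]; omega)
  exact ⟨S, hS.1, hS.2.1, Or.inr hS.2.2.1, hS.2.2.2⟩
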